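/- arXiv:2510.04473 — 5 statements merged into one kernel-verified Lean document; each statement's English description precedes it below -/
import Mathlib

section
/- Let g ∈ EuclideanSpace ℝ (Fin n) with g ≠ 0, let H be a symmetric n×n real matrix, c ∈ ℝ, Δ > 0, and m(s) := c + ⟨g, s⟩ + (1/2)·⟨s, H·s⟩. Define the Cauchy point s_C := −t_C·g, where t_C := min(‖g‖²/⟨g, H·g⟩, Δ/‖g‖) if ⟨g, H·g⟩ > 0 and t_C := Δ/‖g‖ otherwise. Then ‖s_C‖ ≤ Δ and m(0) − m(s_C) ≥ (1/2)·‖g‖·min(Δ, ‖g‖/(‖H‖ + 1)). -/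
open scoped RealInnerProductSpace
open Metric

noncomputable section

/-- Matrix–vector multiplication as a map on Euclidean space. -/
def mulVecE {n : ℕ} (H : Matrix (Fin n) (Fin n) ℝ) (v : EuclideanSpace ℝ (Fin n)) :
    EuclideanSpace ℝ (Fin n) :=
  (EuclideanSpace.equiv (Fin n) ℝ).symm (H.mulVec (EuclideanSpace.equiv (Fin n) ℝ v))

/-- Operator 2-norm of a matrix (the norm induced by the Euclidean vector norm). -/
def opNorm {n : ℕ} (H : Matrix (Fin n) (Fin n) ℝ) : ℝ :=
  sSup {r : ℝ | ∃ v : EuclideanSpace ℝ (Fin n), ‖v‖ ≤ 1 ∧ r = ‖mulVecE H v‖}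

/-- Quadratic model about `x` with data `(c, g, H)`. -/
def qm {n : ℕ} (x : EuclideanSpace ℝ (Fin n)) (c : ℝ) (g : EuclideanSpace ℝ (Fin n))
    (H : Matrix (Fin n) (Fin n) ℝ) (y : EuclideanSpace ℝ (Fin n)) : ℝ :=
  c + ⟪g, y - x⟫ + (1 / 2) * ⟪y - x, mulVecE H (y - x)⟫

/-- `m` is a fully linear model for `f` on the closed ball `B(x, Δ)`. -/
def IsFullyLinear {n : ℕ} (f m : EuclideanSpace ℝ (Fin n) → ℝ)
    (x : EuclideanSpace ℝ (Fin n)) (Δ κmf κmg : ℝ) : Prop :=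
  ∀ y ∈ closedBall x Δ,
    |m y - f y| ≤ κmf * Δ ^ 2 ∧ ‖gradient m y - gradient f y‖ ≤ κmg * Δ

/-- `m` is a fully quadratic model for `f` on the closed ball `B(x, Δ)`. -/
def IsFullyQuadratic {n : ℕ} (f m : EuclideanSpace ℝ (Fin n) → ℝ)
    (x : EuclideanSpace ℝ (Fin n)) (Δ κmf κmg κmh : ℝ) : Prop :=
  ∀ y ∈ closedBall x Δ,
    |m y - f y| ≤ κmf * Δ ^ 3 ∧ ‖gradient m y - gradient f y‖ ≤ κmg * Δ ^ 2 ∧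
      ‖fderiv ℝ (gradient m) y - fderiv ℝ (gradient f) y‖ ≤ κmh * Δ

/-- Smallest eigenvalue of a symmetric matrix: the minimum of `⟪u, H u⟫` over unit vectors. -/
def lambdaMin {n : ℕ} (H : Matrix (Fin n) (Fin n) ℝ) : ℝ :=
  sInf {r : ℝ | ∃ u : EuclideanSpace ℝ (Fin n), ‖u‖ = 1 ∧ r = ⟪u, mulVecE H u⟫}

/-- `τ(H) = max(-λ_min(H), 0)`. -/
def tau {n : ℕ} (H : Matrix (Fin n) (Fin n) ℝ) : ℝ := max (-lambdaMin H) 0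

/-- Hessian matrix of `f` at `x`. -/
def hessMat {n : ℕ} (f : EuclideanSpace ℝ (Fin n) → ℝ) (x : EuclideanSpace ℝ (Fin n)) :
    Matrix (Fin n) (Fin n) ℝ :=
  Matrix.of fun i j => fderiv ℝ (gradient f) x (EuclideanSpace.single j 1) i

/-- ℓ∞ operator norm of a matrix: the maximum absolute row sum. -/
def linftyNorm {m k : Type*} [Fintype m] [Fintype k] (A : Matrix m k ℝ) : ℝ :=
  sSup (Set.range fun i => ∑ j, |A i j|)

/-!
Along the ray `s = -t • g` the model decreases by `t‖g‖² - t²⟪g, H g⟫ / 2`, a one-dimensional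
problem. The Cauchy step always satisfies `t ⟪g, H g⟫ ≤ ‖g‖²`, so the decrease is at least
`t‖g‖² / 2`; and `t‖g‖ ≥ min Δ (‖g‖ / (‖H‖ + 1))` because `⟪g, H g⟫ ≤ ‖H‖ ‖g‖²`.
-/

lemma mulVecE_eq_toEuclideanCLM {n : ℕ} (H : Matrix (Fin n) (Fin n) ℝ)
    (v : EuclideanSpace ℝ (Fin n)) : mulVecE H v = Matrix.toEuclideanCLM (𝕜 := ℝ) H v :=
  rfl

lemma opNorm_eq_norm_toEuclideanCLM {n : ℕ} (H : Matrix (Fin n) (Fin n) ℝ) :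
    opNorm H = ‖Matrix.toEuclideanCLM (𝕜 := ℝ) H‖ := by
  rw [← ContinuousLinearMap.sSup_unitClosedBall_eq_norm, opNorm]
  congr 1
  ext r
  simp [mulVecE_eq_toEuclideanCLM, eq_comm]

lemma opNorm_nonneg {n : ℕ} (H : Matrix (Fin n) (Fin n) ℝ) : 0 ≤ opNorm H :=
  opNorm_eq_norm_toEuclideanCLM H ▸ norm_nonneg _

lemma inner_mulVecE_le {n : ℕ} (H : Matrix (Fin n) (Fin n) ℝ) (v : EuclideanSpace ℝ (Fin n)) :
    ⟪v, mulVecE H v⟫ ≤ opNorm H * ‖v‖ ^ 2 :=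
  calc ⟪v, mulVecE H v⟫ ≤ ‖v‖ * ‖mulVecE H v‖ := real_inner_le_norm _ _
    _ ≤ ‖v‖ * (opNorm H * ‖v‖) := by
      gcongr
      rw [opNorm_eq_norm_toEuclideanCLM]
      exact (Matrix.toEuclideanCLM (𝕜 := ℝ) H).le_opNorm v
    _ = opNorm H * ‖v‖ ^ 2 := by ring

lemma inner_smul_mulVecE_smul {n : ℕ} (H : Matrix (Fin n) (Fin n) ℝ) (t : ℝ)
    (v : EuclideanSpace ℝ (Fin n)) :
    ⟪t • v, mulVecE H (t • v)⟫ = t ^ 2 * ⟪v, mulVecE H v⟫ := by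
  simp only [mulVecE_eq_toEuclideanCLM, map_smul, real_inner_smul_left, real_inner_smul_right]
  ring

/-- `G` stands for `‖g‖` and `a` for the curvature `⟪g, H g⟫`: the Cauchy point is
`-(cauchyStep ‖g‖ ⟪g, H g⟫ Δ) • g`. -/
def cauchyStep (G a Δ : ℝ) : ℝ :=
  if 0 < a then min (G ^ 2 / a) (Δ / G) else Δ / G

section cauchyStep

variable {G a Δ : ℝ}

lemma cauchyStep_nonneg (hG : 0 ≤ G) (hΔ : 0 ≤ Δ) : 0 ≤ cauchyStep G a Δ := by
  unfold cauchyStep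
  split_ifs
  · exact le_min (by positivity) (by positivity)
  · positivity

lemma cauchyStep_mul_le (hG : 0 < G) : cauchyStep G a Δ * G ≤ Δ := by
  calc cauchyStep G a Δ * G ≤ Δ / G * G := by
        gcongr
        unfold cauchyStep
        split_ifs
        exacts [min_le_right _ _, le_rfl]
    _ = Δ := div_mul_cancel₀ Δ hG.ne'

lemma cauchyStep_mul_le_sq (hG : 0 ≤ G) (hΔ : 0 ≤ Δ) : cauchyStep G a Δ * a ≤ G ^ 2 := by
  unfold cauchyStep
  split_ifs with ha
  · exact (le_div_iff₀ ha).mp (min_le_left _ _)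
  · exact (mul_nonpos_of_nonneg_of_nonpos (by positivity) (not_lt.mp ha)).trans (sq_nonneg G)

lemma min_le_cauchyStep_mul {L : ℝ} (hG : 0 < G) (hL : 0 < L) (haL : a ≤ L * G ^ 2) :
    min Δ (G / L) ≤ cauchyStep G a Δ * G := by
  unfold cauchyStep
  split_ifs with ha
  · rw [min_mul_of_nonneg _ _ hG.le, div_mul_cancel₀ Δ hG.ne', min_comm]
    refine min_le_min ?_ le_rfl
    rw [div_le_iff₀ hL, div_mul_eq_mul_div, div_mul_eq_mul_div, le_div_iff₀ ha]
    nlinarith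
  · exact (min_le_left _ _).trans (div_mul_cancel₀ Δ hG.ne').ge

lemma half_mul_min_le_cauchyStep_decrease {L : ℝ} (hG : 0 < G) (hΔ : 0 ≤ Δ) (hL : 0 < L)
    (haL : a ≤ L * G ^ 2) :
    1 / 2 * G * min Δ (G / L) ≤ cauchyStep G a Δ * G ^ 2 - 1 / 2 * cauchyStep G a Δ ^ 2 * a := by
  set t := cauchyStep G a Δ
  have hta := cauchyStep_mul_le_sq (a := a) hG.le hΔ
  have ht := cauchyStep_nonneg (a := a) hG.le hΔ
  calc 1 / 2 * G * min Δ (G / L) ≤ 1 / 2 * G * (t * G) := by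
        gcongr; exact min_le_cauchyStep_mul hG hL haL
    _ ≤ t * G ^ 2 - 1 / 2 * t ^ 2 * a := by nlinarith [mul_le_mul_of_nonneg_left hta ht]

end cauchyStep

theorem cauchy_point_decrease_general {n : ℕ} (c : ℝ) (g : EuclideanSpace ℝ (Fin n)) (hg : g ≠ 0)
    (H : Matrix (Fin n) (Fin n) ℝ) (Δ : ℝ) (hΔ : 0 < Δ)
    (m : EuclideanSpace ℝ (Fin n) → ℝ)
    (hm : ∀ s, m s = c + ⟪g, s⟫ + (1 / 2) * ⟪s, mulVecE H s⟫)
    (tC : ℝ)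
    (htC : tC = if 0 < ⟪g, mulVecE H g⟫ then
        min (‖g‖ ^ 2 / ⟪g, mulVecE H g⟫) (Δ / ‖g‖) else Δ / ‖g‖)
    (sC : EuclideanSpace ℝ (Fin n)) (hsC : sC = -(tC • g)) :
    ‖sC‖ ≤ Δ ∧ (1 / 2) * ‖g‖ * min Δ (‖g‖ / (opNorm H + 1)) ≤ m 0 - m sC := by
  have hG : 0 < ‖g‖ := norm_pos_iff.mpr hg
  have ht : tC = cauchyStep ‖g‖ ⟪g, mulVecE H g⟫ Δ := htC
  have hnorm : ‖sC‖ = tC * ‖g‖ := by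
    rw [hsC, norm_neg, norm_smul, Real.norm_of_nonneg (ht ▸ cauchyStep_nonneg hG.le hΔ.le)]
  have hdecrease : m 0 - m sC = tC * ‖g‖ ^ 2 - 1 / 2 * tC ^ 2 * ⟪g, mulVecE H g⟫ := by
    rw [hm, hm, hsC, ← neg_smul, inner_smul_mulVecE_smul, real_inner_smul_right,
      real_inner_self_eq_norm_sq]
    simp only [inner_zero_right, inner_zero_left]
    ring
  have hHg : ⟪g, mulVecE H g⟫ ≤ (opNorm H + 1) * ‖g‖ ^ 2 :=
    (inner_mulVecE_le H g).trans (by gcongr; linarith)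
  have hL : 0 < opNorm H + 1 := by linarith [opNorm_nonneg H]
  rw [hnorm, hdecrease, ht]
  exact ⟨cauchyStep_mul_le hG, half_mul_min_le_cauchyStep_decrease hG hΔ.le hL hHg⟩

/-- The Cauchy point is feasible and achieves the standard sufficient decrease
(Lemma `Theorem 6.3.1, Conn–Gould–Toint`). -/
theorem cauchy_point_decrease {n : ℕ} (c : ℝ) (g : EuclideanSpace ℝ (Fin n)) (hg : g ≠ 0)
    (H : Matrix (Fin n) (Fin n) ℝ) (hHsymm : H.IsSymm) (Δ : ℝ) (hΔ : 0 < Δ)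
    (m : EuclideanSpace ℝ (Fin n) → ℝ)
    (hm : ∀ s, m s = c + ⟪g, s⟫ + (1 / 2) * ⟪s, mulVecE H s⟫)
    (tC : ℝ)
    (htC : tC = if 0 < ⟪g, mulVecE H g⟫ then
        min (‖g‖ ^ 2 / ⟪g, mulVecE H g⟫) (Δ / ‖g‖) else Δ / ‖g‖)
    (sC : EuclideanSpace ℝ (Fin n)) (hsC : sC = -(tC • g)) :
    ‖sC‖ ≤ Δ ∧ (1 / 2) * ‖g‖ * min Δ (‖g‖ / (opNorm H + 1)) ≤ m 0 - m sC :=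
  cauchy_point_decrease_general c g hg H Δ hΔ m hm tC htC sC hsC
end
end

section
/- Let f : EuclideanSpace ℝ (Fin n) → ℝ be twice continuously differentiable with Hessian ∇²f Lipschitz continuous in operator norm with constant L_H. Let x ∈ EuclideanSpace ℝ (Fin n), Δ > 0, κ > 0, and let m be a quadratic model about x, m(y) = c + ⟨g, y − x⟩ + (1/2)·⟨y − x, H·(y − x)⟩ with H symmetric. If |m(y) − f(x) − ⟨∇f(x), y − x⟩ − (1/2)·⟨y − x, ∇²f(x)·(y − x)⟩| ≤ κ·Δ³ for all y in the closed ball B(x,Δ), then m is fully quadratic for f in B(x,Δ) with constants κ_mf = κ + L_H/6, κ_mg = 34κ + L_H/2, and κ_mh = 24κ + L_H. -/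
open scoped RealInnerProductSpace
open Metric

noncomputable section

/-!
Writing `y = x + s`, the error `m(x + s) - T₂f(x + s)` of the model against the second-order
Taylor polynomial of `f` at `x` is itself a quadratic `a + ⟪b, s⟫ + ½⟪s, T s⟫` in `s`, with
`T = H - ∇²f(x)` symmetric, and it is at most `κΔ³` on `‖s‖ ≤ Δ`. Its odd part gives
`‖b‖ ≤ κΔ²`, its even part gives `|⟪s, T s⟫| ≤ 4κΔ³`, and since the norm of a symmetric operator
is the supremum of its Rayleigh quotient, `‖T‖ ≤ 4κΔ`. The Taylor remainders of `f`, `∇f` and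
`∇²f` are at most `L_H/6‖s‖³`, `L_H/2‖s‖²` and `L_H‖s‖`; adding them to these bounds gives the
three estimates.
-/

open Set
open Matrix (toEuclideanCLM isSymmetric_toEuclideanLin_iff isHermitian_iff_isSymm)

lemma norm_le_of_norm_deriv_le_mul_pow {F : Type*} [NormedAddCommGroup F] [NormedSpace ℝ F]
    {φ φ' : ℝ → F} {C : ℝ} (k : ℕ) (h0 : φ 0 = 0)
    (hφ : ∀ t ∈ Icc (0 : ℝ) 1, HasDerivAt φ (φ' t) t)
    (hbound : ∀ t ∈ Ico (0 : ℝ) 1, ‖φ' t‖ ≤ C * t ^ k) :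
    ‖φ 1‖ ≤ C / (k + 1) := by
  have hB : ∀ t, HasDerivAt (fun t => C / (k + 1) * t ^ (k + 1)) (C * t ^ k) t := fun t => by
    refine ((hasDerivAt_pow (k + 1) t).const_mul (C / (k + 1))).congr_deriv ?_
    push_cast
    field_simp
  simpa using image_norm_le_of_norm_deriv_right_le_deriv_boundary
    (fun t ht => (hφ t ht).continuousAt.continuousWithinAt)
    (fun t ht => (hφ t (Ico_subset_Icc_self ht)).hasDerivWithinAt) (by simp [h0]) hB hbound
    (right_mem_Icc.2 zero_le_one)

section Taylor

variable {E : Type*} [NormedAddCommGroup E] [InnerProductSpace ℝ E]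

lemma norm_sub_sub_fderiv_le_of_lipschitzWith {F : Type*} [NormedAddCommGroup F]
    [NormedSpace ℝ F] {G : E → F} (hG : Differentiable ℝ G) {L : NNReal}
    (hL : LipschitzWith L (fderiv ℝ G)) (x v : E) :
    ‖G (x + v) - G x - fderiv ℝ G x v‖ ≤ L / 2 * ‖v‖ ^ 2 := by
  have hφ : ∀ t : ℝ, HasDerivAt (fun t : ℝ => G (x + t • v) - G x - t • fderiv ℝ G x v)
      (fderiv ℝ G (x + t • v) v - fderiv ℝ G x v) t := fun t => by
    have hline : HasDerivAt (fun t : ℝ => x + t • v) v t := by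
      simpa using ((hasDerivAt_id t).smul_const v).const_add x
    have := (hG (x + t • v)).hasFDerivAt.comp_hasDerivAt t hline
    have h2 := (hasDerivAt_id t).smul_const (fderiv ℝ G x v)
    rw [one_smul] at h2
    exact (this.sub_const (G x)).sub h2
  have hbound : ∀ t ∈ Ico (0 : ℝ) 1,
      ‖fderiv ℝ G (x + t • v) v - fderiv ℝ G x v‖ ≤ L * ‖v‖ ^ 2 * t ^ 1 := fun t ht => by
    calc ‖fderiv ℝ G (x + t • v) v - fderiv ℝ G x v‖
        ≤ ‖fderiv ℝ G (x + t • v) - fderiv ℝ G x‖ * ‖v‖ := by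
          rw [← sub_apply]; exact ContinuousLinearMap.le_opNorm _ _
      _ ≤ L * ‖t • v‖ * ‖v‖ := by
          gcongr; simpa [dist_eq_norm] using hL.dist_le_mul (x + t • v) x
      _ = L * ‖v‖ ^ 2 * t ^ 1 := by rw [norm_smul, Real.norm_of_nonneg ht.1]; ring
  have := norm_le_of_norm_deriv_le_mul_pow 1 (by simp) (fun t _ => hφ t) hbound
  simp only [one_smul] at this
  convert this using 1; ring

variable [CompleteSpace E]

lemma abs_sub_taylor_le_of_lipschitzWith {f : E → ℝ} (hf : Differentiable ℝ f)
    (hG : Differentiable ℝ (gradient f)) {L : NNReal}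
    (hL : LipschitzWith L (fderiv ℝ (gradient f))) (x v : E) :
    |f (x + v) - f x - ⟪gradient f x, v⟫ - 1 / 2 * ⟪v, fderiv ℝ (gradient f) x v⟫|
      ≤ L / 6 * ‖v‖ ^ 3 := by
  set Hx := fderiv ℝ (gradient f) x
  have hψ : ∀ t : ℝ, HasDerivAt
      (fun t : ℝ => f (x + t • v) - f x - t * ⟪gradient f x, v⟫ - t ^ 2 / 2 * ⟪v, Hx v⟫)
      (⟪gradient f (x + t • v) - gradient f x - Hx (t • v), v⟫) t := fun t => by
    have hline : HasDerivAt (fun t : ℝ => x + t • v) v t := by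
      simpa using ((hasDerivAt_id t).smul_const v).const_add x
    have h1 := (hf (x + t • v)).hasGradientAt.hasFDerivAt.comp_hasDerivAt t hline
    have h2 := ((hasDerivAt_id t).mul_const ⟪gradient f x, v⟫)
    have h3 := ((hasDerivAt_pow 2 t).div_const 2).mul_const ⟪v, Hx v⟫
    refine (((h1.sub_const (f x)).sub h2).sub h3).congr_deriv ?_
    simp [inner_sub_left, real_inner_smul_left, real_inner_comm v (Hx v)]
  have hbound : ∀ t ∈ Ico (0 : ℝ) 1,
      ‖⟪gradient f (x + t • v) - gradient f x - Hx (t • v), v⟫‖ ≤ L / 2 * ‖v‖ ^ 3 * t ^ 2 :=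
    fun t ht => by
    calc ‖⟪gradient f (x + t • v) - gradient f x - Hx (t • v), v⟫‖
        ≤ ‖gradient f (x + t • v) - gradient f x - Hx (t • v)‖ * ‖v‖ := norm_inner_le_norm _ _
      _ ≤ L / 2 * ‖t • v‖ ^ 2 * ‖v‖ := by
          gcongr; exact norm_sub_sub_fderiv_le_of_lipschitzWith hG hL x (t • v)
      _ = L / 2 * ‖v‖ ^ 3 * t ^ 2 := by rw [norm_smul, Real.norm_of_nonneg ht.1]; ring
  have := norm_le_of_norm_deriv_le_mul_pow 2 (by simp) (fun t _ => hψ t) hbound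
  simp only [one_smul, Real.norm_eq_abs] at this
  convert this using 2 <;> norm_num; ring

end Taylor

section Gradient

variable {E : Type*} [NormedAddCommGroup E] [InnerProductSpace ℝ E] [CompleteSpace E]

lemma ContDiff.differentiable_gradient {f : E → ℝ} (hf : ContDiff ℝ 2 f) :
    Differentiable ℝ (gradient f) :=
  (InnerProductSpace.toDual ℝ E).symm.differentiable.comp
    ((hf.fderiv_right (m := 1) (by norm_num)).differentiable one_ne_zero)

lemma hasGradientAt_quadratic {A : E →L[ℝ] E} (hA : (A : E →ₗ[ℝ] E).IsSymmetric)
    (x g : E) (c : ℝ) (y : E) :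
    HasGradientAt (fun y => c + ⟪g, y - x⟫ + 1 / 2 * ⟪y - x, A (y - x)⟫) (g + A (y - x)) y := by
  rw [hasGradientAt_iff_hasFDerivAt]
  have h₁ : HasFDerivAt (fun y : E => y - x) (ContinuousLinearMap.id ℝ E) y :=
    (hasFDerivAt_id y).sub_const x
  have h₂ := h₁.inner ℝ (A.hasFDerivAt.comp y h₁)
  refine (((hasFDerivAt_const c y).add ((hasFDerivAt_const g y).inner ℝ h₁)).add
    (h₂.const_mul (1 / 2))).congr_fderiv ?_
  ext v
  have hsymm : ⟪v, A (y - x)⟫ = ⟪y - x, A v⟫ := by rw [← hA.apply_clm, real_inner_comm]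
  simp only [add_apply, ContinuousLinearMap.comp_apply, ContinuousLinearMap.prod_apply,
    ContinuousLinearMap.id_apply, zero_apply, smul_apply, smul_eq_mul, fderivInnerCLM_apply,
    inner_zero_left, Function.comp_apply, InnerProductSpace.toDual_apply_apply, inner_add_left,
    hsymm, hA.apply_clm]
  ring

lemma inner_fderiv_gradient_apply {f : E → ℝ} {x : E}
    (hf : DifferentiableAt ℝ (fderiv ℝ f) x) (u v : E) :
    ⟪fderiv ℝ (gradient f) x u, v⟫ = fderiv ℝ (fderiv ℝ f) x u v := by
  have : HasFDerivAt (gradient f)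
      ((InnerProductSpace.toDual ℝ E).symm.toContinuousLinearEquiv.toContinuousLinearMap.comp
        (fderiv ℝ (fderiv ℝ f) x)) x :=
    (InnerProductSpace.toDual ℝ E).symm.toContinuousLinearEquiv.hasFDerivAt.comp x
      hf.hasFDerivAt
  rw [this.fderiv]
  simp [← InnerProductSpace.toDual_apply_apply]

lemma isSymmetric_fderiv_gradient {f : E → ℝ} {x : E} (hf : ContDiffAt ℝ 2 f x) :
    (fderiv ℝ (gradient f) x : E →ₗ[ℝ] E).IsSymmetric := fun u v => by
  have hd : DifferentiableAt ℝ (fderiv ℝ f) x :=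
    (hf.fderiv_right (m := 1) (by norm_num)).differentiableAt one_ne_zero
  simp only [ContinuousLinearMap.coe_coe]
  rw [← real_inner_comm u, inner_fderiv_gradient_apply hd, inner_fderiv_gradient_apply hd,
    hf.isSymmSndFDerivAt (by simp)]

end Gradient

section QuadraticBounds

variable {E : Type*} [NormedAddCommGroup E] [InnerProductSpace ℝ E]

lemma norm_mul_le_of_abs_inner_le {b : E} {r ε : ℝ} (hr : 0 ≤ r)
    (h : ∀ s : E, ‖s‖ ≤ r → |⟪b, s⟫| ≤ ε) : ‖b‖ * r ≤ ε := by
  rcases eq_or_ne b 0 with rfl | hb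
  · simpa using h 0 (by simpa using hr)
  have hs : ‖(r / ‖b‖) • b‖ = r := by
    rw [norm_smul, Real.norm_of_nonneg (by positivity), div_mul_cancel₀ _ (norm_ne_zero_iff.2 hb)]
  have := h _ hs.le
  rw [real_inner_smul_right, real_inner_self_eq_norm_sq, abs_of_nonneg (by positivity)] at this
  convert this using 1
  field_simp

lemma opNorm_mul_sq_le_of_abs_inner_self_le {T : E →L[ℝ] E}
    (hT : (T : E →ₗ[ℝ] E).IsSymmetric) {r M : ℝ} (hr : 0 < r)
    (h : ∀ s : E, ‖s‖ ≤ r → |⟪s, T s⟫| ≤ M) : ‖T‖ * r ^ 2 ≤ M := by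
  rw [← le_div_iff₀ (by positivity), T.norm_eq_iSup_rayleighQuotient hT]
  refine ciSup_le fun x => ?_
  rcases eq_or_ne x 0 with rfl | hx
  · have hM : 0 ≤ M := by simpa using h 0 (by simpa using hr.le)
    simpa using div_nonneg hM (sq_nonneg r)
  have hx' : ‖x‖ ≠ 0 := norm_ne_zero_iff.2 hx
  have hs : ‖(r / ‖x‖) • x‖ = r := by
    rw [norm_smul, Real.norm_of_nonneg (by positivity), div_mul_cancel₀ _ hx']
  have := h _ hs.le
  rw [map_smul, real_inner_smul_left, real_inner_smul_right, ← mul_assoc, abs_mul,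
    abs_of_nonneg (by positivity), real_inner_comm] at this
  simp only [ContinuousLinearMap.rayleighQuotient, ContinuousLinearMap.reApplyInnerSelf_apply,
    RCLike.re_to_real]
  rw [abs_div, abs_of_nonneg (by positivity : (0 : ℝ) ≤ ‖x‖ ^ 2), le_div_iff₀ (by positivity)]
  field_simp at this ⊢
  linarith

variable {a ε r : ℝ} {b : E} {T : E →L[ℝ] E}
  (hq : ∀ s : E, ‖s‖ ≤ r → |a + ⟪b, s⟫ + 1 / 2 * ⟪s, T s⟫| ≤ ε)
include hq

lemma abs_const_le_of_abs_quadratic_le (hr : 0 ≤ r) : |a| ≤ ε := by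
  simpa using hq 0 (by simpa using hr)

lemma norm_linear_mul_le_of_abs_quadratic_le (hr : 0 ≤ r) : ‖b‖ * r ≤ ε := by
  refine norm_mul_le_of_abs_inner_le hr fun s hs => ?_
  have h₁ := abs_le.1 (hq s hs)
  have h₂ := abs_le.1 (hq (-s) (by rwa [norm_neg]))
  simp only [inner_neg_left, inner_neg_right, map_neg, neg_neg] at h₂
  exact abs_le.2 ⟨by linarith, by linarith⟩

lemma opNorm_quadratic_mul_sq_le_of_abs_quadratic_le (hT : (T : E →ₗ[ℝ] E).IsSymmetric)
    (hr : 0 < r) : ‖T‖ * r ^ 2 ≤ 4 * ε := by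
  refine opNorm_mul_sq_le_of_abs_inner_self_le hT hr fun s hs => ?_
  have h₀ := abs_le.1 (abs_const_le_of_abs_quadratic_le hq hr.le)
  have h₁ := abs_le.1 (hq s hs)
  have h₂ := abs_le.1 (hq (-s) (by rwa [norm_neg]))
  simp only [inner_neg_left, inner_neg_right, map_neg, neg_neg] at h₂
  exact abs_le.2 ⟨by linarith, by linarith⟩

end QuadraticBounds

section QuadraticModel

variable {n : ℕ} {H : Matrix (Fin n) (Fin n) ℝ}

lemma isSymmetric_toEuclideanCLM (hH : H.IsSymm) :
    ((toEuclideanCLM (𝕜 := ℝ) H : EuclideanSpace ℝ (Fin n) →L[ℝ] _) :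
      EuclideanSpace ℝ (Fin n) →ₗ[ℝ] _).IsSymmetric :=
  isSymmetric_toEuclideanLin_iff.2 (isHermitian_iff_isSymm.2 hH)

lemma qm_eq (x : EuclideanSpace ℝ (Fin n)) (c : ℝ) (g : EuclideanSpace ℝ (Fin n)) :
    qm x c g H = fun y => c + ⟪g, y - x⟫ + 1 / 2 * ⟪y - x, toEuclideanCLM (𝕜 := ℝ) H (y - x)⟫ :=
  rfl

lemma gradient_qm (hH : H.IsSymm) (x : EuclideanSpace ℝ (Fin n)) (c : ℝ)
    (g : EuclideanSpace ℝ (Fin n)) :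
    gradient (qm x c g H) = fun y => g + toEuclideanCLM (𝕜 := ℝ) H (y - x) := by
  ext1 y
  rw [qm_eq]
  exact (hasGradientAt_quadratic (isSymmetric_toEuclideanCLM hH) x g c y).gradient

lemma fderiv_gradient_qm (hH : H.IsSymm) (x : EuclideanSpace ℝ (Fin n)) (c : ℝ)
    (g y : EuclideanSpace ℝ (Fin n)) :
    fderiv ℝ (gradient (qm x c g H)) y = toEuclideanCLM (𝕜 := ℝ) H := by
  rw [gradient_qm hH]
  exact (((toEuclideanCLM (𝕜 := ℝ) H).hasFDerivAt.comp y
    ((hasFDerivAt_id y).sub_const x)).const_add g).fderiv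

lemma qm_sub_taylor_eq (f : EuclideanSpace ℝ (Fin n) → ℝ) (x s : EuclideanSpace ℝ (Fin n))
    (c : ℝ) (g : EuclideanSpace ℝ (Fin n)) :
    qm x c g H (x + s) - f x - ⟪gradient f x, s⟫ - 1 / 2 * ⟪s, fderiv ℝ (gradient f) x s⟫ =
      c - f x + ⟪g - gradient f x, s⟫ +
        1 / 2 * ⟪s, (toEuclideanCLM (𝕜 := ℝ) H - fderiv ℝ (gradient f) x) s⟫ := by
  simp only [qm_eq, add_sub_cancel_left, sub_apply, inner_sub_left, inner_sub_right]
  ring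

variable {f : EuclideanSpace ℝ (Fin n) → ℝ} {LH : NNReal}
  (hLip : LipschitzWith LH (fderiv ℝ (gradient f))) (x y : EuclideanSpace ℝ (Fin n)) (c : ℝ)
  (g : EuclideanSpace ℝ (Fin n))
include hLip

lemma abs_qm_sub_le (hf : Differentiable ℝ f) (hG : Differentiable ℝ (gradient f)) :
    |qm x c g H y - f y| ≤
      |qm x c g H y - f x - ⟪gradient f x, y - x⟫ -
        1 / 2 * ⟪y - x, fderiv ℝ (gradient f) x (y - x)⟫| + LH / 6 * ‖y - x‖ ^ 3 := by
  have h := abs_sub_taylor_le_of_lipschitzWith hf hG hLip x (y - x)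
  rw [add_sub_cancel] at h
  refine le_trans (le_of_eq ?_) ((abs_sub _ _).trans (add_le_add le_rfl h))
  congr 1; ring

lemma norm_gradient_qm_sub_le (hH : H.IsSymm) (hG : Differentiable ℝ (gradient f)) :
    ‖gradient (qm x c g H) y - gradient f y‖ ≤ ‖g - gradient f x‖ +
      ‖toEuclideanCLM (𝕜 := ℝ) H - fderiv ℝ (gradient f) x‖ * ‖y - x‖ +
        LH / 2 * ‖y - x‖ ^ 2 := by
  have h := norm_sub_sub_fderiv_le_of_lipschitzWith hG hLip x (y - x)
  rw [add_sub_cancel] at h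
  rw [gradient_qm hH]
  calc _ = ‖(g - gradient f x) + (toEuclideanCLM (𝕜 := ℝ) H - fderiv ℝ (gradient f) x) (y - x)
          - (gradient f y - gradient f x - fderiv ℝ (gradient f) x (y - x))‖ := by
        congr 1; simp only [sub_apply]; abel
    _ ≤ _ := norm_sub_le_of_le (norm_add_le_of_le le_rfl (ContinuousLinearMap.le_opNorm _ _)) h

lemma norm_fderiv_gradient_qm_sub_le (hH : H.IsSymm) :
    ‖fderiv ℝ (gradient (qm x c g H)) y - fderiv ℝ (gradient f) y‖ ≤
      ‖toEuclideanCLM (𝕜 := ℝ) H - fderiv ℝ (gradient f) x‖ + LH * ‖y - x‖ := by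
  rw [fderiv_gradient_qm hH, ← sub_add_sub_cancel _ (fderiv ℝ (gradient f) x)]
  refine norm_add_le_of_le le_rfl ?_
  rw [← dist_eq_norm, ← dist_eq_norm, dist_comm y]
  exact hLip.dist_le_mul x y

end QuadraticModel

/-- A quadratic model whose values are within `κ·Δ³` of the second-order Taylor series of `f`
on `B(x,Δ)` is fully quadratic with constants `κ_mf = κ + L_H/6`, `κ_mg = 34κ + L_H/2`,
`κ_mh = 24κ + L_H`. -/
theorem fully_quadratic_of_taylor_accuracy {n : ℕ}
    (f : EuclideanSpace ℝ (Fin n) → ℝ) (hf : ContDiff ℝ 2 f)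
    (LH : NNReal) (hLip : LipschitzWith LH (fun y => fderiv ℝ (gradient f) y))
    (x : EuclideanSpace ℝ (Fin n)) (Δ : ℝ) (hΔ : 0 < Δ) (κ : ℝ) (hκ : 0 < κ)
    (c : ℝ) (g : EuclideanSpace ℝ (Fin n)) (H : Matrix (Fin n) (Fin n) ℝ)
    (hHsymm : H.IsSymm)
    (m : EuclideanSpace ℝ (Fin n) → ℝ) (hm : ∀ y, m y = qm x c g H y)
    (happrox : ∀ y ∈ closedBall x Δ,
      |m y - f x - ⟪gradient f x, y - x⟫ -
        (1 / 2) * ⟪y - x, fderiv ℝ (gradient f) x (y - x)⟫| ≤ κ * Δ ^ 3) :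
    IsFullyQuadratic f m x Δ (κ + (LH : ℝ) / 6) (34 * κ + (LH : ℝ) / 2)
      (24 * κ + (LH : ℝ)) := by
  obtain rfl : m = qm x c g H := funext hm
  have hG := hf.differentiable_gradient
  set T := toEuclideanCLM (𝕜 := ℝ) H - fderiv ℝ (gradient f) x
  have hq : ∀ s, ‖s‖ ≤ Δ → |c - f x + ⟪g - gradient f x, s⟫ + 1 / 2 * ⟪s, T s⟫| ≤ κ * Δ ^ 3 :=
    fun s hs => by
      have := happrox (x + s) (by simpa using hs)
      rwa [add_sub_cancel_left, qm_sub_taylor_eq] at this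
  have hb : ‖g - gradient f x‖ ≤ κ * Δ ^ 2 := by
    have := norm_linear_mul_le_of_abs_quadratic_le hq hΔ.le
    exact le_of_mul_le_mul_right (by linarith) hΔ
  have hT : ‖T‖ ≤ 4 * κ * Δ := by
    have := opNorm_quadratic_mul_sq_le_of_abs_quadratic_le hq
      ((isSymmetric_toEuclideanCLM hHsymm).sub (isSymmetric_fderiv_gradient hf.contDiffAt)) hΔ
    exact le_of_mul_le_mul_right (by linarith) (pow_pos hΔ 2)
  intro y hy
  have hs : ‖y - x‖ ≤ Δ := mem_closedBall_iff_norm.1 hy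
  refine ⟨?_, ?_, ?_⟩
  · calc _ ≤ κ * Δ ^ 3 + LH / 6 * Δ ^ 3 := by
          grw [abs_qm_sub_le hLip x y c g (hf.differentiable two_ne_zero) hG, happrox y hy, hs]
      _ = _ := by ring
  · calc _ ≤ κ * Δ ^ 2 + 4 * κ * Δ * Δ + LH / 2 * Δ ^ 2 := by
          grw [norm_gradient_qm_sub_le hLip x y c g hHsymm hG, hb, hT, hs]
      _ ≤ _ := by nlinarith
  · calc _ ≤ 4 * κ * Δ + LH * Δ := by
          grw [norm_fderiv_gradient_qm_sub_le hLip x y c g hHsymm, hT, hs]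
      _ ≤ _ := by nlinarith
end
end

section
/- Let f : EuclideanSpace ℝ (Fin n) → ℝ be differentiable, x ∈ EuclideanSpace ℝ (Fin n), Δ > 0, and let m be a quadratic model about x with data (c, g, H), H symmetric, ‖H‖ ≤ κ_H − 1 for some κ_H ≥ 1. Suppose m is fully linear for f in the closed ball B(x,Δ) with constants κ_mf, κ_mg > 0, and suppose s ∈ EuclideanSpace ℝ (Fin n) satisfies ‖s‖ ≤ Δ and m(x) − m(x+s) ≥ κ_s·‖g‖·min(Δ, ‖g‖/(‖H‖ + 1)) for some κ_s ∈ (0, 1/2). Let η_S ∈ (0,1), μ_c > 0, and define ρ := (f(x) − f(x+s))/(m(x) − m(x+s)). If g ≠ 0 and Δ ≤ min(κ_s·(1 − η_S)/(2κ_mf), 1/κ_H, 1/μ_c)·‖g‖, then ρ ≥ η_S and ‖g‖ ≥ μ_c·Δ. -/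
open scoped RealInnerProductSpace
open Metric

noncomputable section

lemma mul_le_mul_of_le_div_mul {Δ a b G : ℝ} (hb : 0 < b) (h : Δ ≤ a / b * G) :
    b * Δ ≤ a * G := by
  rw [div_mul_eq_mul_div, le_div_iff₀ hb] at h
  linarith

lemma le_div_of_abs_sub_le {fa fb ma mb ε η : ℝ} (hpred : 0 < ma - mb)
    (ha : |ma - fa| ≤ ε) (hb : |mb - fb| ≤ ε) (hε : 2 * ε ≤ (1 - η) * (ma - mb)) :
    η ≤ (fa - fb) / (ma - mb) := by
  rw [le_div_iff₀ hpred]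
  linarith [abs_le.mp ha, abs_le.mp hb]

theorem very_successful_iteration_general {n : ℕ}
    (f : EuclideanSpace ℝ (Fin n) → ℝ)
    (x : EuclideanSpace ℝ (Fin n)) (Δ : ℝ) (hΔ : 0 < Δ)
    (g : EuclideanSpace ℝ (Fin n)) (H : Matrix (Fin n) (Fin n) ℝ)
    (κH : ℝ) (hHnorm : opNorm H ≤ κH - 1)
    (m : EuclideanSpace ℝ (Fin n) → ℝ)
    (κmf κmg : ℝ) (hκmf : 0 < κmf)
    (hFL : IsFullyLinear f m x Δ κmf κmg)
    (s : EuclideanSpace ℝ (Fin n)) (hs : ‖s‖ ≤ Δ)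
    (κs : ℝ) (hκs : κs ∈ Set.Ioo (0 : ℝ) (1 / 2))
    (hdec : κs * ‖g‖ * min Δ (‖g‖ / (opNorm H + 1)) ≤ m x - m (x + s))
    (ηS μc : ℝ) (hηS : ηS ∈ Set.Ioo (0 : ℝ) 1) (hμc : 0 < μc)
    (ρ : ℝ) (hρ : ρ = (f x - f (x + s)) / (m x - m (x + s)))
    (hΔsmall : Δ ≤ min (κs * (1 - ηS) / (2 * κmf)) (min (1 / κH) (1 / μc)) * ‖g‖) :
    ηS ≤ ρ ∧ μc * Δ ≤ ‖g‖ := by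
  have hH := opNorm_nonneg H
  have bound {a b : ℝ} (hb : 0 < b) (hmin : min (κs * (1 - ηS) / (2 * κmf))
      (min (1 / κH) (1 / μc)) ≤ a / b) : b * Δ ≤ a * ‖g‖ :=
    mul_le_mul_of_le_div_mul hb (hΔsmall.trans (by gcongr))
  have hΔκmf : 2 * κmf * Δ ≤ κs * (1 - ηS) * ‖g‖ := bound (by positivity) (min_le_left _ _)
  have hΔκH : κH * Δ ≤ 1 * ‖g‖ :=
    bound (by linarith) ((min_le_right _ _).trans (min_le_left _ _))
  have hΔμc : μc * Δ ≤ 1 * ‖g‖ := bound hμc ((min_le_right _ _).trans (min_le_right _ _))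
  have hg : 0 < ‖g‖ := (mul_pos hμc hΔ).trans_le (by simpa using hΔμc)
  have hmin : min Δ (‖g‖ / (opNorm H + 1)) = Δ := by
    refine min_eq_left ((le_div_iff₀ (by linarith)).mpr ?_)
    calc Δ * (opNorm H + 1) ≤ κH * Δ := by nlinarith
      _ ≤ ‖g‖ := by simpa using hΔκH
  rw [hmin] at hdec
  have hpred : 0 < m x - m (x + s) := (mul_pos (mul_pos hκs.1 hg) hΔ).trans_le hdec
  have herr (y) (hy : y ∈ closedBall x Δ) : |m y - f y| ≤ κmf * Δ ^ 2 := (hFL y hy).1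
  refine ⟨hρ ▸ le_div_of_abs_sub_le hpred (herr x (mem_closedBall_self hΔ.le))
    (herr (x + s) (by simpa [mem_closedBall_iff_norm] using hs)) ?_, by linarith⟩
  calc 2 * (κmf * Δ ^ 2) = 2 * κmf * Δ * Δ := by ring
    _ ≤ (1 - ηS) * (κs * ‖g‖ * Δ) := by nlinarith
    _ ≤ (1 - ηS) * (m x - m (x + s)) := by gcongr; linarith [hηS.2]

/-- If the trust-region radius is small enough relative to `‖g‖`, the iteration is
very successful (Lemma `lem_very_successful_dfo`). -/
theorem very_successful_iteration {n : ℕ}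
    (f : EuclideanSpace ℝ (Fin n) → ℝ) (hf : Differentiable ℝ f)
    (x : EuclideanSpace ℝ (Fin n)) (Δ : ℝ) (hΔ : 0 < Δ)
    (c : ℝ) (g : EuclideanSpace ℝ (Fin n)) (H : Matrix (Fin n) (Fin n) ℝ)
    (hHsymm : H.IsSymm) (κH : ℝ) (hκH : 1 ≤ κH) (hHnorm : opNorm H ≤ κH - 1)
    (m : EuclideanSpace ℝ (Fin n) → ℝ) (hm : ∀ y, m y = qm x c g H y)
    (κmf κmg : ℝ) (hκmf : 0 < κmf) (hκmg : 0 < κmg)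
    (hFL : IsFullyLinear f m x Δ κmf κmg)
    (s : EuclideanSpace ℝ (Fin n)) (hs : ‖s‖ ≤ Δ)
    (κs : ℝ) (hκs : κs ∈ Set.Ioo (0 : ℝ) (1 / 2))
    (hdec : κs * ‖g‖ * min Δ (‖g‖ / (opNorm H + 1)) ≤ m x - m (x + s))
    (ηS μc : ℝ) (hηS : ηS ∈ Set.Ioo (0 : ℝ) 1) (hμc : 0 < μc)
    (ρ : ℝ) (hρ : ρ = (f x - f (x + s)) / (m x - m (x + s)))
    (hgne : g ≠ 0)
    (hΔsmall : Δ ≤ min (κs * (1 - ηS) / (2 * κmf)) (min (1 / κH) (1 / μc)) * ‖g‖) :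
    ηS ≤ ρ ∧ μc * Δ ≤ ‖g‖ :=
  very_successful_iteration_general f x Δ hΔ g H κH hHnorm m κmf κmg hκmf hFL s hs κs hκs hdec ηS μc
    hηS hμc ρ hρ hΔsmall
end
end

section
/- Let f : EuclideanSpace ℝ (Fin n) → ℝ be twice continuously differentiable, x ∈ EuclideanSpace ℝ (Fin n), 0 < Δ ≤ Δ_max, and let m be a quadratic model about x with data (c, g, H), H symmetric with ‖H‖ ≤ κ_H − 1 for some κ_H ≥ 1, which is fully quadratic for f in B(x,Δ) with constants κ_mf, κ_mg, κ_mh > 0. Suppose s satisfies ‖s‖ ≤ Δ and m(x) − m(x+s) ≥ κ_s·max(‖g‖·min(Δ, ‖g‖/(‖H‖ + 1)), τ(H)·Δ²) for some κ_s ∈ (0, 1/2). Let η_S ∈ (0,1), μ_c > 0, and define ρ := (f(x) − f(x+s))/(m(x) − m(x+s)). If g ≠ 0 and Δ ≤ min(κ_s·(1 − η_S)/(2κ_mf·Δ_max), 1/κ_H, 1/μ_c)·‖g‖, then ρ ≥ η_S and max(‖g‖, τ(H)) ≥ μ_c·Δ. -/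
open scoped RealInnerProductSpace
open Metric

noncomputable section

lemma le_decrease_ratio_of_abs_sub_le {α : Type*} (f m : α → ℝ) {x y : α} {ε η D : ℝ}
    (hx : |m x - f x| ≤ ε) (hy : |m y - f y| ≤ ε) (hη : η ≤ 1) (hD : 0 < D)
    (hdec : D ≤ m x - m y) (hε : 2 * ε ≤ (1 - η) * D) :
    η ≤ (f x - f y) / (m x - m y) := by
  rw [le_div_iff₀ (hD.trans_le hdec)]
  have hηD : (1 - η) * D ≤ (1 - η) * (m x - m y) :=
    mul_le_mul_of_nonneg_left hdec (sub_nonneg.mpr hη)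
  linarith [abs_le.mp hx, abs_le.mp hy]

lemma two_mul_mul_pow_three_le {a b G Δ Δmax : ℝ} (ha : 0 < a) (hΔ : 0 < Δ)
    (hΔmax : Δ ≤ Δmax) (h : Δ ≤ b / (2 * a * Δmax) * G) :
    2 * a * Δ ^ 3 ≤ b * G * Δ := by
  rw [div_mul_eq_mul_div, le_div_iff₀ (by nlinarith)] at h
  calc 2 * a * Δ ^ 3 = 2 * a * Δ * (Δ * Δ) := by ring
    _ ≤ 2 * a * Δ * (Δ * Δmax) := by gcongr
    _ = Δ * (Δ * (2 * a * Δmax)) := by ring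
    _ ≤ Δ * (b * G) := mul_le_mul_of_nonneg_left h hΔ.le
    _ = b * G * Δ := by ring

theorem very_successful_iteration_second_order_grad_general {n : ℕ}
    (f : EuclideanSpace ℝ (Fin n) → ℝ)
    (x : EuclideanSpace ℝ (Fin n)) (Δ Δmax : ℝ) (hΔ : 0 < Δ) (hΔmax : Δ ≤ Δmax)
    (g : EuclideanSpace ℝ (Fin n)) (H : Matrix (Fin n) (Fin n) ℝ)
    (κH : ℝ) (hHnorm : opNorm H ≤ κH - 1)
    (m : EuclideanSpace ℝ (Fin n) → ℝ)
    (κmf κmg κmh : ℝ) (hκmf : 0 < κmf)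
    (hFQ : IsFullyQuadratic f m x Δ κmf κmg κmh)
    (s : EuclideanSpace ℝ (Fin n)) (hs : ‖s‖ ≤ Δ)
    (κs : ℝ) (hκs : κs ∈ Set.Ioo (0 : ℝ) (1 / 2))
    (hdec : κs * max (‖g‖ * min Δ (‖g‖ / (opNorm H + 1))) (tau H * Δ ^ 2) ≤
      m x - m (x + s))
    (ηS μc : ℝ) (hηS : ηS ∈ Set.Ioo (0 : ℝ) 1) (hμc : 0 < μc)
    (ρ : ℝ) (hρ : ρ = (f x - f (x + s)) / (m x - m (x + s)))
    (hgne : g ≠ 0)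
    (hΔsmall : Δ ≤ min (κs * (1 - ηS) / (2 * κmf * Δmax)) (min (1 / κH) (1 / μc)) * ‖g‖) :
    ηS ≤ ρ ∧ μc * Δ ≤ max ‖g‖ (tau H) := by
  have hg : 0 < ‖g‖ := norm_pos_iff.mpr hgne
  simp only [min_mul_of_nonneg _ _ hg.le, le_min_iff, one_div_mul_eq_div] at hΔsmall
  obtain ⟨hΔerr, hΔκH, hΔμc⟩ := hΔsmall
  have hΔg : Δ ≤ ‖g‖ / (opNorm H + 1) :=
    hΔκH.trans (div_le_div_of_nonneg_left hg.le (by linarith [opNorm_nonneg H]) (by linarith))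
  have hdecrease : κs * (‖g‖ * Δ) ≤ m x - m (x + s) := by
    refine le_trans ?_ hdec
    rw [min_eq_left hΔg]
    exact mul_le_mul_of_nonneg_left (le_max_left _ _) hκs.1.le
  have herr : 2 * (κmf * Δ ^ 3) ≤ (1 - ηS) * (κs * (‖g‖ * Δ)) := by
    linarith [two_mul_mul_pow_three_le hκmf hΔ hΔmax hΔerr]
  have hxs : x + s ∈ closedBall x Δ := by simpa [mem_closedBall, dist_eq_norm] using hs
  constructor
  · rw [hρ]
    exact le_decrease_ratio_of_abs_sub_le f m (hFQ x (mem_closedBall_self hΔ.le)).1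
      (hFQ _ hxs).1 hηS.2.le (mul_pos hκs.1 (mul_pos hg hΔ)) hdecrease herr
  · exact le_max_of_le_left ((le_div_iff₀' hμc).mp hΔμc)

/-- Second-order analogue of the very-successful-iteration lemma, gradient case
(Lemma `lem_very_successful_dfo_2_g`). -/
theorem very_successful_iteration_second_order_grad {n : ℕ}
    (f : EuclideanSpace ℝ (Fin n) → ℝ) (hf : ContDiff ℝ 2 f)
    (x : EuclideanSpace ℝ (Fin n)) (Δ Δmax : ℝ) (hΔ : 0 < Δ) (hΔmax : Δ ≤ Δmax)
    (c : ℝ) (g : EuclideanSpace ℝ (Fin n)) (H : Matrix (Fin n) (Fin n) ℝ)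
    (hHsymm : H.IsSymm) (κH : ℝ) (hκH : 1 ≤ κH) (hHnorm : opNorm H ≤ κH - 1)
    (m : EuclideanSpace ℝ (Fin n) → ℝ) (hm : ∀ y, m y = qm x c g H y)
    (κmf κmg κmh : ℝ) (hκmf : 0 < κmf) (hκmg : 0 < κmg) (hκmh : 0 < κmh)
    (hFQ : IsFullyQuadratic f m x Δ κmf κmg κmh)
    (s : EuclideanSpace ℝ (Fin n)) (hs : ‖s‖ ≤ Δ)
    (κs : ℝ) (hκs : κs ∈ Set.Ioo (0 : ℝ) (1 / 2))
    (hdec : κs * max (‖g‖ * min Δ (‖g‖ / (opNorm H + 1))) (tau H * Δ ^ 2) ≤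
      m x - m (x + s))
    (ηS μc : ℝ) (hηS : ηS ∈ Set.Ioo (0 : ℝ) 1) (hμc : 0 < μc)
    (ρ : ℝ) (hρ : ρ = (f x - f (x + s)) / (m x - m (x + s)))
    (hgne : g ≠ 0)
    (hΔsmall : Δ ≤ min (κs * (1 - ηS) / (2 * κmf * Δmax)) (min (1 / κH) (1 / μc)) * ‖g‖) :
    ηS ≤ ρ ∧ μc * Δ ≤ max ‖g‖ (tau H) :=
  very_successful_iteration_second_order_grad_general f x Δ Δmax hΔ hΔmax g H κH hHnorm m κmf κmg
    κmh hκmf hFQ s hs κs hκs hdec ηS μc hηS hμc ρ hρ hgne hΔsmall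
end
end

section
/- Let f : EuclideanSpace ℝ (Fin n) → ℝ be twice continuously differentiable, x ∈ EuclideanSpace ℝ (Fin n), Δ > 0, and let m be a quadratic model about x with data (c, g, H), H symmetric, which is fully quadratic for f in B(x,Δ) with constants κ_mf, κ_mg, κ_mh > 0. Suppose s satisfies ‖s‖ ≤ Δ and m(x) − m(x+s) ≥ κ_s·max(‖g‖·min(Δ, ‖g‖/(‖H‖ + 1)), τ(H)·Δ²) for some κ_s ∈ (0, 1/2). Let η_S ∈ (0,1), μ_c > 0, and define ρ := (f(x) − f(x+s))/(m(x) − m(x+s)). If τ(H) > 0 and Δ ≤ min(κ_s·(1 − η_S)/(2κ_mf), 1/μ_c)·τ(H), then ρ ≥ η_S and max(‖g‖, τ(H)) ≥ μ_c·Δ. -/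
/-!
The model decrease along `s` is at least `κs τ(H) Δ²`, while full quadraticity bounds the model
error at `x` and at `x + s` by `κmf Δ³` each. Hence the relative error of the reduction ratio is at
most `2 κmf Δ / (κs τ(H))`, which is at most `1 - ηS` once `Δ` is small against `τ(H)`. The bound
`μc Δ ≤ τ(H)` is immediate from the same smallness assumption.
-/

open scoped RealInnerProductSpace
open Metric

noncomputable section

theorem le_div_sub_of_abs_sub_le {fx fy mx my ε η : ℝ} (hdec : 0 < mx - my)
    (hx : |mx - fx| ≤ ε) (hy : |my - fy| ≤ ε) (hε : 2 * ε ≤ (1 - η) * (mx - my)) :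
    η ≤ (fx - fy) / (mx - my) := by
  rw [le_div_iff₀ hdec]
  linarith [abs_le.mp hx, abs_le.mp hy]

theorem IsFullyQuadratic.le_reduction_ratio {n : ℕ} {f m : EuclideanSpace ℝ (Fin n) → ℝ}
    {x s : EuclideanSpace ℝ (Fin n)} {Δ κmf κmg κmh η : ℝ}
    (hFQ : IsFullyQuadratic f m x Δ κmf κmg κmh) (hs : ‖s‖ ≤ Δ)
    (hdec : 0 < m x - m (x + s)) (herr : 2 * (κmf * Δ ^ 3) ≤ (1 - η) * (m x - m (x + s))) :
    η ≤ (f x - f (x + s)) / (m x - m (x + s)) :=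
  le_div_sub_of_abs_sub_le hdec (hFQ x (mem_closedBall_self ((norm_nonneg s).trans hs))).1
    (hFQ (x + s) (add_mem_closedBall_iff_norm.mpr hs)).1 herr

theorem very_successful_iteration_second_order_curvature_general {n : ℕ}
    (f : EuclideanSpace ℝ (Fin n) → ℝ)
    (x : EuclideanSpace ℝ (Fin n)) (Δ : ℝ) (hΔ : 0 < Δ)
    (g : EuclideanSpace ℝ (Fin n)) (H : Matrix (Fin n) (Fin n) ℝ)
    (m : EuclideanSpace ℝ (Fin n) → ℝ)
    (κmf κmg κmh : ℝ) (hκmf : 0 < κmf)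
    (hFQ : IsFullyQuadratic f m x Δ κmf κmg κmh)
    (s : EuclideanSpace ℝ (Fin n)) (hs : ‖s‖ ≤ Δ)
    (κs : ℝ) (hκs : κs ∈ Set.Ioo (0 : ℝ) (1 / 2))
    (hdec : κs * max (‖g‖ * min Δ (‖g‖ / (opNorm H + 1))) (tau H * Δ ^ 2) ≤
      m x - m (x + s))
    (ηS μc : ℝ) (hηS : ηS ∈ Set.Ioo (0 : ℝ) 1) (hμc : 0 < μc)
    (ρ : ℝ) (hρ : ρ = (f x - f (x + s)) / (m x - m (x + s)))
    (htau : 0 < tau H)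
    (hΔsmall : Δ ≤ min (κs * (1 - ηS) / (2 * κmf)) (1 / μc) * tau H) :
    ηS ≤ ρ ∧ μc * Δ ≤ max ‖g‖ (tau H) := by
  obtain ⟨hκs, -⟩ := hκs
  have hΔcurv : Δ ≤ κs * (1 - ηS) / (2 * κmf) * tau H :=
    hΔsmall.trans (mul_le_mul_of_nonneg_right (min_le_left _ _) htau.le)
  have hΔμ : Δ ≤ 1 / μc * tau H :=
    hΔsmall.trans (mul_le_mul_of_nonneg_right (min_le_right _ _) htau.le)
  have hdecτ : κs * (tau H * Δ ^ 2) ≤ m x - m (x + s) :=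
    (mul_le_mul_of_nonneg_left (le_max_right _ _) hκs.le).trans hdec
  refine ⟨hρ ▸ hFQ.le_reduction_ratio hs (lt_of_lt_of_le (by positivity) hdecτ) ?_, ?_⟩
  · have h2κΔ : 2 * κmf * Δ ≤ κs * (1 - ηS) * tau H := by
      rw [div_mul_eq_mul_div, le_div_iff₀ (by positivity)] at hΔcurv
      linarith
    calc 2 * (κmf * Δ ^ 3) = 2 * κmf * Δ * Δ ^ 2 := by ring
      _ ≤ κs * (1 - ηS) * tau H * Δ ^ 2 := by gcongr
      _ = (1 - ηS) * (κs * (tau H * Δ ^ 2)) := by ring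
      _ ≤ (1 - ηS) * (m x - m (x + s)) := by gcongr; linarith [hηS.2]
  · rw [one_div_mul_eq_div, le_div_iff₀ hμc] at hΔμ
    linarith [le_max_right ‖g‖ (tau H)]

/-- Second-order analogue of the very-successful-iteration lemma, negative-curvature case
(Lemma `lem_very_successful_dfo_2_H`). -/
theorem very_successful_iteration_second_order_curvature {n : ℕ}
    (f : EuclideanSpace ℝ (Fin n) → ℝ) (hf : ContDiff ℝ 2 f)
    (x : EuclideanSpace ℝ (Fin n)) (Δ : ℝ) (hΔ : 0 < Δ)
    (c : ℝ) (g : EuclideanSpace ℝ (Fin n)) (H : Matrix (Fin n) (Fin n) ℝ)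
    (hHsymm : H.IsSymm)
    (m : EuclideanSpace ℝ (Fin n) → ℝ) (hm : ∀ y, m y = qm x c g H y)
    (κmf κmg κmh : ℝ) (hκmf : 0 < κmf) (hκmg : 0 < κmg) (hκmh : 0 < κmh)
    (hFQ : IsFullyQuadratic f m x Δ κmf κmg κmh)
    (s : EuclideanSpace ℝ (Fin n)) (hs : ‖s‖ ≤ Δ)
    (κs : ℝ) (hκs : κs ∈ Set.Ioo (0 : ℝ) (1 / 2))
    (hdec : κs * max (‖g‖ * min Δ (‖g‖ / (opNorm H + 1))) (tau H * Δ ^ 2) ≤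
      m x - m (x + s))
    (ηS μc : ℝ) (hηS : ηS ∈ Set.Ioo (0 : ℝ) 1) (hμc : 0 < μc)
    (ρ : ℝ) (hρ : ρ = (f x - f (x + s)) / (m x - m (x + s)))
    (htau : 0 < tau H)
    (hΔsmall : Δ ≤ min (κs * (1 - ηS) / (2 * κmf)) (1 / μc) * tau H) :
    ηS ≤ ρ ∧ μc * Δ ≤ max ‖g‖ (tau H) :=
  very_successful_iteration_second_order_curvature_general f x Δ hΔ g H m κmf κmg κmh hκmf hFQ s hs
    κs hκs hdec ηS μc hηS hμc ρ hρ htau hΔsmall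
end
end
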